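/- arXiv:1201.5669 — 6 statements merged into one kernel-verified Lean document; each statement's English description precedes it below -/
import Mathlib

section
/- Let δ be an integer and λ a bipartition. Define I_∧(λ) = {λ•_i − (i−1) : i ≥ 1} and I_∨(λ,δ) = {i − δ − λ°_i : i ≥ 1}. Then the quantity #(I_∧(λ) ∩ I_∨(λ,δ) ∩ [−N, N]) − #([−N, N] \ (I_∧(λ) ∪ I_∨(λ,δ))) is equal to δ for all sufficiently large N. -/
/-- A partition, 0-indexed: `f i` is the part in row `i+1`. -/
def IsPartition (f : ℕ → ℕ) : Prop :=
  (∀ i, f (i + 1) ≤ f i) ∧ (∃ N, ∀ i ≥ N, f i = 0)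

/-- The set `I_∧(λ) = {λ•_i − (i−1) : i ≥ 1}`, 0-indexed. -/
def Iwedge (f : ℕ → ℕ) : Set ℤ := {x | ∃ i : ℕ, x = (f i : ℤ) - i}

/-- The set `I_∨(λ, δ) = {i − δ − λ°_i : i ≥ 1}`, 0-indexed. -/
def Ivee (g : ℕ → ℕ) (δ : ℤ) : Set ℤ := {x | ∃ i : ℕ, x = (i : ℤ) + 1 - δ - g i}

lemma wedge_card (f : ℕ → ℕ) (hmono : ∀ i, f (i + 1) ≤ f i)
    (Mf : ℕ) (hMf : ∀ i ≥ Mf, f i = 0) (N : ℕ) (h1 : Mf ≤ N) (h2 : f 0 ≤ N) :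
    (Iwedge f ∩ Set.Icc (-(N : ℤ)) (N : ℤ)).ncard = N + 1 := by
  have hanti : ∀ i j : ℕ, i ≤ j → f j ≤ f i :=
    fun i j h => antitone_nat_of_succ_le hmono h
  have heq : Iwedge f ∩ Set.Icc (-(N : ℤ)) (N : ℤ) =
      ↑((Finset.range (N + 1)).image (fun i => (f i : ℤ) - i)) := by
    ext x
    simp only [Set.mem_inter_iff, Set.mem_Icc, Finset.coe_image, Set.mem_image,
      Finset.mem_coe, Finset.mem_range, Iwedge, Set.mem_setOf_eq]
    constructor
    · rintro ⟨⟨i, rfl⟩, hlo, hhi⟩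
      refine ⟨i, ?_, rfl⟩
      by_contra h
      push_neg at h
      have : f i = 0 := hMf i (by omega)
      omega
    · rintro ⟨i, hi, rfl⟩
      have hfi : f i ≤ f 0 := hanti 0 i (Nat.zero_le i)
      exact ⟨⟨i, rfl⟩, by omega, by omega⟩
  rw [heq, Set.ncard_coe_finset, Finset.card_image_of_injOn, Finset.card_range]
  have hsa : StrictAnti (fun i : ℕ => (f i : ℤ) - i) := by
    apply strictAnti_nat_of_succ_lt
    intro n
    have := hmono n
    show (f (n + 1) : ℤ) - (n + 1 : ℕ) < (f n : ℤ) - n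
    push_cast
    omega
  exact Set.InjOn.mono (Set.subset_univ _) (hsa.injective.injOn)

lemma vee_card (g : ℕ → ℕ) (hmono : ∀ i, g (i + 1) ≤ g i) (δ : ℤ)
    (Mg : ℕ) (hMg : ∀ i ≥ Mg, g i = 0) (N : ℕ)
    (h1 : (Mg : ℤ) ≤ (N : ℤ) + δ) (h2 : (g 0 : ℤ) + δ ≤ (N : ℤ)) :
    ((Ivee g δ ∩ Set.Icc (-(N : ℤ)) (N : ℤ)).ncard : ℤ) = (N : ℤ) + δ := by
  have hanti : ∀ i j : ℕ, i ≤ j → g j ≤ g i :=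
    fun i j h => antitone_nat_of_succ_le hmono h
  set K : ℕ := ((N : ℤ) + δ).toNat with hK
  have hKZ : (K : ℤ) = (N : ℤ) + δ := by
    rw [hK]; omega
  have heq : Ivee g δ ∩ Set.Icc (-(N : ℤ)) (N : ℤ) =
      ↑((Finset.range K).image (fun i : ℕ => (i : ℤ) + 1 - δ - g i)) := by
    ext x
    simp only [Set.mem_inter_iff, Set.mem_Icc, Finset.coe_image, Set.mem_image,
      Finset.mem_coe, Finset.mem_range, Ivee, Set.mem_setOf_eq]
    constructor
    · rintro ⟨⟨i, rfl⟩, hlo, hhi⟩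
      refine ⟨i, ?_, rfl⟩
      by_contra h
      push_neg at h
      have hi : Mg ≤ i := by omega
      have : g i = 0 := hMg i hi
      omega
    · rintro ⟨i, hi, rfl⟩
      have hgi : g i ≤ g 0 := hanti 0 i (Nat.zero_le i)
      have hiK : (i : ℤ) < K := by exact_mod_cast hi
      exact ⟨⟨i, rfl⟩, by omega, by omega⟩
  rw [heq, Set.ncard_coe_finset, Finset.card_image_of_injOn, Finset.card_range, hKZ]
  have hsm : StrictMono (fun i : ℕ => (i : ℤ) + 1 - δ - g i) := by
    apply strictMono_nat_of_lt_succ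
    intro n
    have := hmono n
    show (n : ℤ) + 1 - δ - g n < ((n + 1 : ℕ) : ℤ) + 1 - δ - g (n + 1)
    push_cast
    omega
  exact Set.InjOn.mono (Set.subset_univ _) (hsm.injective.injOn)

/-- for large `N`, the number of `×`'s minus the number of `○`'s in the
window `[−N, N]` of the weight diagram equals `δ`. -/
theorem crosses_sub_circles_eq_delta (f g : ℕ → ℕ)
    (hf : IsPartition f) (hg : IsPartition g) (δ : ℤ) :
    ∃ N₀ : ℕ, ∀ N : ℕ, N₀ ≤ N →
      ((Iwedge f ∩ Ivee g δ ∩ Set.Icc (-(N : ℤ)) (N : ℤ)).ncard : ℤ) -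
        ((Set.Icc (-(N : ℤ)) (N : ℤ) \ (Iwedge f ∪ Ivee g δ)).ncard : ℤ) = δ := by
  obtain ⟨hfm, Mf, hMf⟩ := hf
  obtain ⟨hgm, Mg, hMg⟩ := hg
  refine ⟨Mf + Mg + f 0 + g 0 + δ.natAbs + 1, fun N hN => ?_⟩
  set W : Set ℤ := Set.Icc (-(N : ℤ)) (N : ℤ) with hW
  have hWfin : W.Finite := Set.finite_Icc _ _
  have hWcard : (W.ncard : ℤ) = 2 * N + 1 := by
    rw [hW, ← Finset.coe_Icc, Set.ncard_coe_finset, Int.card_Icc]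
    omega
  have hAfin : (Iwedge f ∩ W).Finite := hWfin.inter_of_right _
  have hBfin : (Ivee g δ ∩ W).Finite := hWfin.inter_of_right _
  have hA : ((Iwedge f ∩ W).ncard : ℤ) = (N : ℤ) + 1 := by
    rw [wedge_card f hfm Mf hMf N (by omega) (by omega)]
    push_cast; ring
  have hB : ((Ivee g δ ∩ W).ncard : ℤ) = (N : ℤ) + δ := by
    apply vee_card g hgm δ Mg hMg N
    · omega
    · omega
  -- crosses
  have hcross : Iwedge f ∩ Ivee g δ ∩ W = (Iwedge f ∩ W) ∩ (Ivee g δ ∩ W) := by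
    ext x; simp only [Set.mem_inter_iff]; tauto
  -- circles
  have hcirc : W \ (Iwedge f ∪ Ivee g δ) = W \ ((Iwedge f ∩ W) ∪ (Ivee g δ ∩ W)) := by
    ext x; simp only [Set.mem_diff, Set.mem_union, Set.mem_inter_iff]; tauto
  have hsub : (Iwedge f ∩ W) ∪ (Ivee g δ ∩ W) ⊆ W :=
    Set.union_subset Set.inter_subset_right Set.inter_subset_right
  have hIE := Set.ncard_union_add_ncard_inter (Iwedge f ∩ W) (Ivee g δ ∩ W) hAfin hBfin
  have hD := Set.ncard_diff_add_ncard_of_subset hsub hWfin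
  rw [hcross, hcirc]
  have hIE' : (((Iwedge f ∩ W) ∪ (Ivee g δ ∩ W)).ncard : ℤ)
      + (((Iwedge f ∩ W) ∩ (Ivee g δ ∩ W)).ncard : ℤ)
      = ((Iwedge f ∩ W).ncard : ℤ) + ((Ivee g δ ∩ W).ncard : ℤ) := by exact_mod_cast hIE
  have hD' : ((W \ ((Iwedge f ∩ W) ∪ (Ivee g δ ∩ W))).ncard : ℤ)
      + (((Iwedge f ∩ W) ∪ (Ivee g δ ∩ W)).ncard : ℤ) = (W.ncard : ℤ) := by exact_mod_cast hD
  omega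
end

section
/- A bipartition λ = (λ•, λ°) is almost (m|n)-cross if and only if λ•_{m+2} = 0, λ°_{m+2} = 0, and λ•_{k+1} + λ°_{m−k+1} = n + 1 for all 0 ≤ k ≤ m. -/
/-- A bipartition `(f, g)` is `(m|n)`-cross if `λ•_{k+1} + λ°_{m−k+1} ≤ n`
for some `0 ≤ k ≤ m` (0-indexed: `f k + g (m − k) ≤ n`). -/
def Cross (m n : ℕ) (f g : ℕ → ℕ) : Prop := ∃ k ≤ m, f k + g (m - k) ≤ n

/-- Componentwise containment of bipartitions. -/
def Contained (f g f' g' : ℕ → ℕ) : Prop := (∀ i, f i ≤ f' i) ∧ (∀ i, g i ≤ g' i)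

/-- A bipartition is almost `(m|n)`-cross if it is not `(m|n)`-cross but every
strictly contained bipartition is `(m|n)`-cross. -/
def AlmostCross (m n : ℕ) (f g : ℕ → ℕ) : Prop :=
  ¬ Cross m n f g ∧
    ∀ f' g' : ℕ → ℕ, IsPartition f' → IsPartition g' → Contained f' g' f g →
      (f', g') ≠ (f, g) → Cross m n f' g'

lemma isPartition_antitone {f : ℕ → ℕ} (hf : IsPartition f) :
    ∀ a b : ℕ, a ≤ b → f b ≤ f a := by
  have key : ∀ d a, f (a + d) ≤ f a := by
    intro d
    induction d with
    | zero => intro a; simp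
    | succ d ih => intro a; calc f (a + (d+1)) = f ((a+d) + 1) := by ring_nf
                        _ ≤ f (a + d) := hf.1 _
                        _ ≤ f a := ih a
  intro a b hab
  have := key (b - a) a
  rwa [Nat.add_sub_cancel' hab] at this

lemma cross_symm {m n : ℕ} {f g : ℕ → ℕ} (h : Cross m n f g) : Cross m n g f := by
  obtain ⟨k, hk, hle⟩ := h
  exact ⟨m - k, Nat.sub_le _ _, by rw [Nat.sub_sub_self hk]; omega⟩

lemma almostCross_symm {m n : ℕ} {f g : ℕ → ℕ} (h : AlmostCross m n f g) :
    AlmostCross m n g f := by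
  refine ⟨fun hc => h.1 (cross_symm hc), fun g' f' hg' hf' hcont hne => ?_⟩
  refine cross_symm (h.2 f' g' hf' hg' ⟨hcont.2, hcont.1⟩ ?_)
  intro heq
  apply hne
  simp only [Prod.mk.injEq] at heq ⊢
  exact ⟨heq.2, heq.1⟩

/-- Key decrement lemma: if `f t ≥ 1` we can decrement the last row with value
`f t`, and almost-crossness yields a row `j ≥ t` with `f j + g (m - j) ≤ n + 1`. -/
lemma dec_lemma {m n : ℕ} {f g : ℕ → ℕ} (hf : IsPartition f) (hgp : IsPartition g)
    (h : AlmostCross m n f g) (t : ℕ) (ht : 1 ≤ f t) :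
    ∃ j, t ≤ j ∧ j ≤ m ∧ f j = f t ∧ f j + g (m - j) ≤ n + 1 := by
  obtain ⟨N, hN⟩ := hf.2
  set N' := max N t with hN'
  set P : ℕ → Prop := fun j => f j = f t with hP
  have htN' : t ≤ N' := le_max_right _ _
  set j1 := Nat.findGreatest P N' with hj1
  have hPj1 : P j1 := Nat.findGreatest_spec (P := P) htN' (by simp [hP])
  rw [hP] at hPj1
  have htj1 : t ≤ j1 := Nat.le_findGreatest htN' rfl
  have hj1N' : j1 ≤ N' := Nat.findGreatest_le _
  have hstep : f (j1 + 1) < f j1 := by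
    by_cases hc : j1 + 1 ≤ N'
    · have hne : ¬ P (j1 + 1) := Nat.findGreatest_is_greatest (Nat.lt_succ_self _) hc
      have hle : f (j1 + 1) ≤ f j1 := hf.1 _
      simp only [hP] at hne
      omega
    · have : f (j1 + 1) = 0 := hN _ (by omega)
      omega
  set f' := Function.update f j1 (f j1 - 1) with hf'
  have hf'j1 : f' j1 = f j1 - 1 := Function.update_self _ _ _
  have hf'ne : ∀ i, i ≠ j1 → f' i = f i := fun i hi => Function.update_of_ne hi _ _
  have hf'le : ∀ i, f' i ≤ f i := by
    intro i
    by_cases hi : i = j1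
    · subst hi; rw [hf'j1]; omega
    · rw [hf'ne i hi]
  have hf'part : IsPartition f' := by
    constructor
    · intro i
      by_cases hi : i = j1
      · subst hi; rw [hf'j1, hf'ne _ (by omega)]; omega
      · rw [hf'ne _ hi]
        by_cases hi1 : i + 1 = j1
        · rw [hi1, hf'j1, ← hi1]; have := hf.1 i; omega
        · rw [hf'ne _ hi1]; exact hf.1 i
    · exact ⟨N' + 1, fun i hi => by
        rw [hf'ne i (by omega)]; exact hN i (by omega)⟩
  have hne : (f', g) ≠ (f, g) := by
    intro heq
    have : f' = f := (Prod.mk.injEq _ _ _ _).mp heq |>.1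
    have := congrFun this j1
    rw [hf'j1] at this
    omega
  obtain ⟨j, hjm, hjle⟩ := h.2 f' g hf'part hgp
    ⟨hf'le, fun i => le_refl _⟩ hne
  by_cases hj : j = j1
  · subst hj
    exact ⟨j1, htj1, hjm, hPj1, by rw [hf'j1] at hjle; omega⟩
  · exfalso
    rw [hf'ne j hj] at hjle
    exact h.1 ⟨j, hjm, hjle⟩

/-- a bipartition is almost `(m|n)`-cross iff `λ•_{m+2} = λ°_{m+2} = 0`
and `λ•_{k+1} + λ°_{m−k+1} = n+1` for all `0 ≤ k ≤ m`. -/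
theorem almostCross_iff (m n : ℕ) (f g : ℕ → ℕ)
    (hf : IsPartition f) (hg : IsPartition g) :
    AlmostCross m n f g ↔
      (f (m + 1) = 0 ∧ g (m + 1) = 0 ∧ ∀ k ≤ m, f k + g (m - k) = n + 1) := by
  constructor
  · intro h
    have hnc : ∀ k ≤ m, n + 1 ≤ f k + g (m - k) := by
      intro k hk
      by_contra hcon
      exact h.1 ⟨k, hk, by omega⟩
    have hfm : f (m + 1) = 0 := by
      by_contra hfm
      obtain ⟨j, hj1, hj2, _, _⟩ := dec_lemma hf hg h (m + 1) (by omega)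
      omega
    have hgm : g (m + 1) = 0 := by
      by_contra hgm
      obtain ⟨j, hj1, hj2, _, _⟩ := dec_lemma hg hf (almostCross_symm h) (m + 1) (by omega)
      omega
    refine ⟨hfm, hgm, fun k hk => ?_⟩
    have hlow := hnc k hk
    by_cases hfk : 1 ≤ f k
    · obtain ⟨j, hj1, hj2, hj3, hj4⟩ := dec_lemma hf hg h k hfk
      have : g (m - k) ≤ g (m - j) := isPartition_antitone hg _ _ (by omega)
      omega
    · -- f k = 0, so g (m - k) ≥ n + 1 ≥ 1; decrement g side at m - k
      have hgk : 1 ≤ g (m - k) := by omega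
      obtain ⟨j, hj1, hj2, hj3, hj4⟩ := dec_lemma hg hf (almostCross_symm h) (m - k) hgk
      have hb : g (m - k) ≤ n + 1 := by omega
      omega
  · rintro ⟨hfm, hgm, hsum⟩
    have hf0 : ∀ i, m + 1 ≤ i → f i = 0 := fun i hi =>
      Nat.le_zero.mp (hfm ▸ isPartition_antitone hf _ _ hi)
    have hg0 : ∀ i, m + 1 ≤ i → g i = 0 := fun i hi =>
      Nat.le_zero.mp (hgm ▸ isPartition_antitone hg _ _ hi)
    constructor
    · rintro ⟨k, hk, hle⟩
      have := hsum k hk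
      omega
    · intro f' g' hf' hg' hcont hne
      by_cases hcf : ∃ i, f' i < f i
      · obtain ⟨i, hi⟩ := hcf
        have him : i ≤ m := by
          by_contra hc
          have := hf0 i (by omega)
          omega
        have := hsum i him
        exact ⟨i, him, by have := hcont.2 (m - i); omega⟩
      · by_cases hcg : ∃ i, g' i < g i
        · obtain ⟨i, hi⟩ := hcg
          have him : i ≤ m := by
            by_contra hc
            have := hg0 i (by omega)
            omega
          have hmk : m - (m - i) = i := by omega
          have := hsum (m - i) (Nat.sub_le _ _)
          rw [hmk] at this
          refine ⟨m - i, Nat.sub_le _ _, ?_⟩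
          rw [hmk]
          have := hcont.1 (m - i)
          omega
        · exfalso
          push_neg at hcf hcg
          apply hne
          have h1 : f' = f := funext fun i => le_antisymm (hcont.1 i) (hcf i)
          have h2 : g' = g := funext fun i => le_antisymm (hcont.2 i) (hcg i)
          rw [h1, h2]
end

section
/- If λ is an almost (m|n)-cross bipartition and m', n' are nonnegative integers with m' ≤ m and n' ≤ n, then there exists an almost (m'|n')-cross bipartition μ with μ ⊂ λ (componentwise containment of both partitions). -/
lemma part_anti (f : ℕ → ℕ) (hf : ∀ i, f (i + 1) ≤ f i) :
    ∀ a b : ℕ, a ≤ b → f b ≤ f a := by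
  intro a b h
  induction b with
  | zero => simp [Nat.le_zero.mp h]
  | succ b ih =>
      rcases Nat.lt_or_ge a (b + 1) with h' | h'
      · exact (hf b).trans (ih (Nat.lt_succ_iff.mp h'))
      · have : a = b + 1 := le_antisymm h h'
        simp [this]

lemma key (m' n' N : ℕ) : ∀ w f g, (∑ i ∈ Finset.range N, (f i + g i)) = w →
    IsPartition f → IsPartition g → (∀ i ≥ N, f i = 0) → (∀ i ≥ N, g i = 0) →
    ¬ Cross m' n' f g →
    ∃ f' g', IsPartition f' ∧ IsPartition g' ∧ AlmostCross m' n' f' g' ∧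
      Contained f' g' f g := by
  intro w
  induction w using Nat.strong_induction_on with
  | _ w ih =>
    intro f g hw hf hg hfN hgN hnc
    by_cases hac : AlmostCross m' n' f g
    · exact ⟨f, g, hf, hg, hac, fun i => le_refl _, fun i => le_refl _⟩
    · rw [AlmostCross] at hac
      push_neg at hac
      obtain ⟨f', g', hf', hg', hc, hne, hnc'⟩ := hac hnc
      have hle : ∀ i, f' i ≤ f i := hc.1
      have hle' : ∀ i, g' i ≤ g i := hc.2
      have hfN' : ∀ i ≥ N, f' i = 0 := fun i hi =>
        Nat.le_zero.mp ((hle i).trans (le_of_eq (hfN i hi)))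
      have hgN' : ∀ i ≥ N, g' i = 0 := fun i hi =>
        Nat.le_zero.mp ((hle' i).trans (le_of_eq (hgN i hi)))
      -- strict weight decrease
      have hex : ∃ j, f' j + g' j < f j + g j := by
        by_contra hco
        push_neg at hco
        apply hne
        have hf_eq : f' = f := funext fun i => le_antisymm (hle i) (by have := hco i; have := hle' i; omega)
        have hg_eq : g' = g := funext fun i => le_antisymm (hle' i) (by have := hco i; have := hle i; omega)
        rw [hf_eq, hg_eq]
      obtain ⟨j, hj⟩ := hex
      have hjN : j < N := by
        by_contra hjn
        push_neg at hjn
        have := hfN j hjn; have := hgN j hjn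
        have := hle j; have := hle' j
        omega
      have hlt : (∑ i ∈ Finset.range N, (f' i + g' i)) < w := by
        rw [← hw]
        exact Finset.sum_lt_sum (fun i _ => Nat.add_le_add (hle i) (hle' i))
          ⟨j, Finset.mem_range.mpr hjN, hj⟩
      obtain ⟨f'', g'', h1, h2, h3, c1, c2⟩ :=
        ih _ hlt f' g' rfl hf' hg' hfN' hgN' hnc'
      exact ⟨f'', g'', h1, h2, h3, fun i => (c1 i).trans (hle i),
        fun i => (c2 i).trans (hle' i)⟩

/-- an almost `(m|n)`-cross bipartition contains an almost
`(m'|n')`-cross bipartition whenever `m' ≤ m` and `n' ≤ n`. -/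
theorem almostCross_contains_smaller (m n m' n' : ℕ) (hm : m' ≤ m) (hn : n' ≤ n)
    (f g : ℕ → ℕ) (hf : IsPartition f) (hg : IsPartition g)
    (h : AlmostCross m n f g) :
    ∃ f' g' : ℕ → ℕ, IsPartition f' ∧ IsPartition g' ∧
      AlmostCross m' n' f' g' ∧ Contained f' g' f g := by
  obtain ⟨Nf, hNf⟩ := hf.2
  obtain ⟨Ng, hNg⟩ := hg.2
  have hnc : ¬ Cross m' n' f g := by
    intro ⟨k, hk, hkn⟩
    apply h.1
    refine ⟨k, hk.trans hm, ?_⟩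
    have : g (m - k) ≤ g (m' - k) := part_anti g hg.1 _ _ (by omega)
    omega
  exact key m' n' (max Nf Ng) _ f g rfl hf hg
    (fun i hi => hNf i (le_trans (le_max_left _ _) hi))
    (fun i hi => hNg i (le_trans (le_max_right _ _) hi)) hnc
end

section
/- If λ is an almost (m|n)-cross bipartition and λ• has a removable box in row i (for some 1 ≤ i ≤ m+1), then λ° has an addable box in row m+2−i, and the bipartition obtained by removing that box from λ• and adding a box in row m+2−i of λ° is again almost (m|n)-cross. -/
lemma almostCross_char (m n : ℕ) (f g : ℕ → ℕ) (hf : IsPartition f) (hg : IsPartition g)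
    (h : AlmostCross m n f g) :
    (∀ k, m < k → f k = 0) ∧ (∀ k, m < k → g k = 0) ∧ (∀ k ≤ m, f k + g (m - k) = n + 1) := by
  obtain ⟨hnc, hmin⟩ := h
  have haf : Antitone f := antitone_nat_of_succ_le hf.1
  have hag : Antitone g := antitone_nat_of_succ_le hg.1
  have hnc' : ∀ k ≤ m, n < f k + g (m - k) := by
    intro k hk
    by_contra hle
    exact hnc ⟨k, hk, by omega⟩
  -- generic truncation-min argument, applied to f then to g
  have key : ∀ f₀ g₀ : ℕ → ℕ, IsPartition f₀ → IsPartition g₀ →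
      (∀ k ≤ m, n < f₀ k + g₀ (m - k)) →
      (∀ f' g' : ℕ → ℕ, IsPartition f' → IsPartition g' → Contained f' g' f₀ g₀ →
        (f', g') ≠ (f₀, g₀) → Cross m n f' g') →
      ∀ k, (m < k → f₀ k = 0) ∧ (k ≤ m → f₀ k ≤ n + 1 - g₀ (m - k)) := by
    intro f₀ g₀ hf₀ hg₀ hnc₀ hmin₀ k
    have haf₀ : Antitone f₀ := antitone_nat_of_succ_le hf₀.1
    have hag₀ : Antitone g₀ := antitone_nat_of_succ_le hg₀.1
    set F : ℕ → ℕ := fun k => if k ≤ m then min (f₀ k) (n + 1 - g₀ (m - k)) else 0 with hF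
    have hFp : IsPartition F := by
      constructor
      · intro j
        have h1 : g₀ (m - j) ≤ g₀ (m - (j + 1)) := hag₀ (by omega)
        have h2 : f₀ (j + 1) ≤ f₀ j := hf₀.1 j
        simp only [hF]
        split_ifs <;> omega
      · exact ⟨m + 1, fun j hj => by simp only [hF]; rw [if_neg (by omega)]⟩
    have hcont : Contained F g₀ f₀ g₀ := by
      refine ⟨fun j => ?_, fun j => le_refl _⟩
      simp only [hF]
      split_ifs <;> omega
    have hncF : ¬ Cross m n F g₀ := by
      rintro ⟨j, hj, hle⟩
      have := hnc₀ j hj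
      simp only [hF, if_pos hj] at hle
      omega
    have hFeq : F = f₀ := by
      by_contra hne
      exact hncF (hmin₀ F g₀ hFp hg₀ hcont (by simp [hne]))
    have := congrFun hFeq k
    simp only [hF] at this
    constructor
    · intro hk; rw [if_neg (by omega)] at this; omega
    · intro hk; rw [if_pos hk] at this; omega
  have keyf := key f g hf hg hnc' hmin
  have keyg := key g f hg hf
    (fun k hk => by
      have := hnc' (m - k) (by omega)
      rw [show m - (m - k) = k by omega] at this
      omega)
    (fun g' f' hg' hf' hcont hne => by
      rcases hmin f' g' hf' hg' ⟨hcont.2, hcont.1⟩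
        (by simp only [ne_eq, Prod.mk.injEq] at hne ⊢; tauto) with ⟨j, hj, hle⟩
      exact ⟨m - j, by omega, by rw [show m - (m - j) = j by omega]; omega⟩)
  refine ⟨fun k hk => (keyf k).1 hk, fun k hk => (keyg k).1 hk, fun k hk => ?_⟩
  have h1 := (keyf k).2 hk
  have h2 := (keyg (m - k)).2 (by omega)
  rw [show m - (m - k) = k by omega] at h2
  have := hnc' k hk
  omega

lemma almostCross_of_char (m n : ℕ) (f g : ℕ → ℕ)
    (hf0 : ∀ k, m < k → f k = 0) (hg0 : ∀ k, m < k → g k = 0)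
    (hsum : ∀ k ≤ m, f k + g (m - k) = n + 1) :
    AlmostCross m n f g := by
  constructor
  · rintro ⟨k, hk, hle⟩
    have := hsum k hk
    omega
  · intro f' g' hf' hg' hcont hne
    by_contra hcr
    have hcr' : ∀ k ≤ m, n < f' k + g' (m - k) := by
      intro k hk
      by_contra hle
      exact hcr ⟨k, hk, by omega⟩
    apply hne
    have hfe : f' = f := by
      funext k
      by_cases hk : k ≤ m
      · have := hcr' k hk
        have h1 := hcont.1 k
        have h2 := hcont.2 (m - k)
        have h3 := hsum k hk
        omega
      · have := hcont.1 k
        have := hf0 k (by omega)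
        omega
    have hge : g' = g := by
      funext j
      by_cases hj : j ≤ m
      · have h0 := hcr' (m - j) (by omega)
        rw [show m - (m - j) = j by omega] at h0
        have h1 := hcont.1 (m - j)
        have h2 := hcont.2 j
        have h3 := hsum (m - j) (by omega)
        rw [show m - (m - j) = j by omega] at h3
        omega
      · have := hcont.2 j
        have := hg0 j (by omega)
        omega
    rw [hfe, hge]

/-- a rightward one-box-bump of an almost `(m|n)`-cross bipartition.
If `λ•` has a removable box in row `i+1` (0-indexed row `i`, `0 ≤ i ≤ m`), then `λ°`
has an addable box in row `m+2−(i+1)` (0-indexed row `m − i`), and removing the former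
while adding the latter yields another almost `(m|n)`-cross bipartition. -/
theorem rightward_one_box_bump (m n : ℕ) (f g : ℕ → ℕ)
    (hf : IsPartition f) (hg : IsPartition g) (h : AlmostCross m n f g)
    (i : ℕ) (hi : i ≤ m) (hrem : f (i + 1) < f i) :
    (m - i = 0 ∨ g (m - i) < g (m - i - 1)) ∧
      IsPartition (Function.update f i (f i - 1)) ∧
      IsPartition (Function.update g (m - i) (g (m - i) + 1)) ∧
      AlmostCross m n (Function.update f i (f i - 1))
        (Function.update g (m - i) (g (m - i) + 1)) := by
  obtain ⟨hf0, hg0, hsum⟩ := almostCross_char m n f g hf hg h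
  have hii : f i + g (m - i) = n + 1 := hsum i hi
  have hfi1 : 1 ≤ f i := by omega
  have haddable : m - i = 0 ∨ g (m - i) < g (m - i - 1) := by
    by_cases him : i < m
    · right
      have h2 := hsum (i + 1) (by omega)
      rw [show m - (i + 1) = m - i - 1 by omega] at h2
      omega
    · left; omega
  have hf'0 : ∀ k, m < k → Function.update f i (f i - 1) k = 0 := by
    intro k hk
    rw [Function.update_of_ne (by omega)]
    exact hf0 k hk
  have hg'0 : ∀ k, m < k → Function.update g (m - i) (g (m - i) + 1) k = 0 := by
    intro k hk
    rw [Function.update_of_ne (by omega)]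
    exact hg0 k hk
  have hsum' : ∀ k ≤ m, Function.update f i (f i - 1) k +
      Function.update g (m - i) (g (m - i) + 1) (m - k) = n + 1 := by
    intro k hk
    by_cases hki : k = i
    · subst hki
      rw [Function.update_self, Function.update_self]
      omega
    · rw [Function.update_of_ne hki, Function.update_of_ne (by omega)]
      exact hsum k hk
  have hf'p : IsPartition (Function.update f i (f i - 1)) := by
    constructor
    · intro k
      by_cases h1 : k + 1 = i
      · have := hf.1 k
        rw [h1] at this
        rw [h1, Function.update_self, Function.update_of_ne (by omega)]
        omega
      · by_cases h2 : k = i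
        · rw [h2, Function.update_of_ne (by omega), Function.update_self]
          omega
        · rw [Function.update_of_ne h1, Function.update_of_ne h2]
          exact hf.1 k
    · exact ⟨m + 1, fun k hk => hf'0 k (by omega)⟩
  have hg'p : IsPartition (Function.update g (m - i) (g (m - i) + 1)) := by
    constructor
    · intro k
      by_cases h1 : k + 1 = m - i
      · rw [h1, Function.update_self, Function.update_of_ne (by omega)]
        rcases haddable with h | h
        · omega
        · rw [show m - i - 1 = k by omega] at h
          omega
      · by_cases h2 : k = m - i
        · have := hg.1 k
          rw [h2] at this
          rw [h2, Function.update_of_ne (by omega), Function.update_self]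
          omega
        · rw [Function.update_of_ne h1, Function.update_of_ne h2]
          exact hg.1 k
    · exact ⟨m + 1, fun k hk => hg'0 k (by omega)⟩
  exact ⟨haddable, hf'p, hg'p, almostCross_of_char m n _ _ hf'0 hg'0 hsum'⟩
end

section
/- Any two almost (m|n)-cross bipartitions are connected by a finite sequence of one-box-bumps: if λ and μ are almost (m|n)-cross, there is a finite sequence λ = ν^(0), ν^(1), ..., ν^(k) = μ of almost (m|n)-cross bipartitions such that each ν^(j+1) is obtained from ν^(j) by a single rightward or leftward one-box-bump. -/
/-- A rightward one-box-bump: remove a removable box from row `i+1` of `f` and add a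
box in row `m+2−(i+1)` (0-indexed `m − i`) of `g`. -/
def RBump (m : ℕ) (f g f' g' : ℕ → ℕ) : Prop :=
  ∃ i ≤ m, f (i + 1) < f i ∧
    f' = Function.update f i (f i - 1) ∧
    g' = Function.update g (m - i) (g (m - i) + 1)

/-- A leftward one-box-bump: remove a removable box from row `i+1` of `g` and add a
box in row `m+2−(i+1)` (0-indexed `m − i`) of `f`. -/
def LBump (m : ℕ) (f g f' g' : ℕ → ℕ) : Prop :=
  ∃ i ≤ m, g (i + 1) < g i ∧
    g' = Function.update g i (g i - 1) ∧
    f' = Function.update f (m - i) (f (m - i) + 1)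

namespace AlmostCrossAux

lemma anti {f : ℕ → ℕ} (hf : IsPartition f) : ∀ {i j : ℕ}, i ≤ j → f j ≤ f i := by
  intro i j hij
  induction j, hij using Nat.le_induction with
  | base => exact le_rfl
  | succ j hj ih => exact le_trans (hf.1 j) ih

/-- Structural characterization of almost-cross pairs of partitions. -/
def Good (m n : ℕ) (f g : ℕ → ℕ) : Prop :=
  IsPartition f ∧ IsPartition g ∧ f (m+1) = 0 ∧ g (m+1) = 0 ∧
    ∀ k ≤ m, f k + g (m - k) = n + 1

lemma update_sub_isPartition {f : ℕ → ℕ} (hf : IsPartition f) {i : ℕ} (h : f (i+1) < f i) :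
    IsPartition (Function.update f i (f i - 1)) := by
  constructor
  · intro t
    rcases eq_or_ne t i with rfl | ht
    · rw [Function.update_self, Function.update_of_ne (show t + 1 ≠ t by omega)]
      omega
    · rw [Function.update_of_ne ht]
      rcases eq_or_ne (t+1) i with hti | hti
      · rw [hti, Function.update_self]
        have h2 := hf.1 t
        rw [hti] at h2
        omega
      · rw [Function.update_of_ne hti]; exact hf.1 t
  · obtain ⟨N, hN⟩ := hf.2
    refine ⟨N + i + 1, fun t ht => ?_⟩
    rw [Function.update_of_ne (show t ≠ i by omega)]
    exact hN t (by omega)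

lemma good_almostCross (m n : ℕ) (f g : ℕ → ℕ) (h : Good m n f g) : AlmostCross m n f g := by
  obtain ⟨hf, hg, hfm, hgm, hsum⟩ := h
  constructor
  · rintro ⟨k, hk, hkle⟩
    have := hsum k hk
    omega
  · intro f' g' hf' hg' hc hne
    obtain ⟨hcf, hcg⟩ := hc
    have key : (∃ i, f' i < f i) ∨ (∃ i, g' i < g i) := by
      by_contra hcon
      push_neg at hcon
      refine hne ?_
      have h1 : f' = f := funext fun i => le_antisymm (hcf i) (hcon.1 i)
      have h2 : g' = g := funext fun i => le_antisymm (hcg i) (hcon.2 i)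
      rw [h1, h2]
    rcases key with ⟨i, hi⟩ | ⟨j, hj⟩
    · have him : i ≤ m := by
        by_contra hgt
        have := anti hf (show m+1 ≤ i by omega)
        omega
      refine ⟨i, him, ?_⟩
      have h1 := hsum i him
      have h2 := hcg (m-i)
      omega
    · have hjm : j ≤ m := by
        by_contra hgt
        have := anti hg (show m+1 ≤ j by omega)
        omega
      refine ⟨m - j, Nat.sub_le _ _, ?_⟩
      have h1 : m - (m - j) = j := by omega
      rw [h1]
      have h2 := hsum (m-j) (Nat.sub_le _ _)
      rw [h1] at h2
      have h3 := hcf (m-j)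
      omega

lemma almostCross_good (m n : ℕ) (f g : ℕ → ℕ) (hf : IsPartition f) (hg : IsPartition g)
    (h : AlmostCross m n f g) : Good m n f g := by
  obtain ⟨hnc, hmin⟩ := h
  simp only [Cross, not_exists, not_and, not_le] at hnc
  have hfm : f (m+1) = 0 := by
    by_contra hne
    set f1 : ℕ → ℕ := fun t => if t ≤ m then f t else 0 with hf1
    have hP : IsPartition f1 := by
      constructor
      · intro t
        by_cases h1 : t + 1 ≤ m
        · simp only [hf1, if_pos h1, if_pos (show t ≤ m by omega)]; exact hf.1 t
        · simp only [hf1, if_neg h1]; exact Nat.zero_le _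
      · exact ⟨m+1, fun t ht => by simp only [hf1, if_neg (show ¬ t ≤ m by omega)]⟩
    have hcont : Contained f1 g f g := by
      refine ⟨fun t => ?_, fun t => le_rfl⟩
      by_cases h1 : t ≤ m <;> simp [hf1, h1]
    have hneq : (f1, g) ≠ (f, g) := by
      intro heq
      have h1 : f1 = f := congrArg Prod.fst heq
      have h2 := congrFun h1 (m+1)
      simp only [hf1, if_neg (show ¬ m+1 ≤ m by omega)] at h2
      exact hne h2.symm
    obtain ⟨k, hk, hkle⟩ := hmin f1 g hP hg hcont hneq
    have h3 := hnc k hk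
    simp only [hf1, if_pos hk] at hkle
    omega
  have hgm : g (m+1) = 0 := by
    by_contra hne
    set g1 : ℕ → ℕ := fun t => if t ≤ m then g t else 0 with hg1
    have hP : IsPartition g1 := by
      constructor
      · intro t
        by_cases h1 : t + 1 ≤ m
        · simp only [hg1, if_pos h1, if_pos (show t ≤ m by omega)]; exact hg.1 t
        · simp only [hg1, if_neg h1]; exact Nat.zero_le _
      · exact ⟨m+1, fun t ht => by simp only [hg1, if_neg (show ¬ t ≤ m by omega)]⟩
    have hcont : Contained f g1 f g := by
      refine ⟨fun t => le_rfl, fun t => ?_⟩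
      by_cases h1 : t ≤ m <;> simp [hg1, h1]
    have hneq : (f, g1) ≠ (f, g) := by
      intro heq
      have h1 : g1 = g := congrArg Prod.snd heq
      have h2 := congrFun h1 (m+1)
      simp only [hg1, if_neg (show ¬ m+1 ≤ m by omega)] at h2
      exact hne h2.symm
    obtain ⟨k, hk, hkle⟩ := hmin f g1 hf hP hcont hneq
    have h3 := hnc k hk
    simp only [hg1, if_pos (Nat.sub_le m k)] at hkle
    omega
  refine ⟨hf, hg, hfm, hgm, ?_⟩
  by_contra hS
  push_neg at hS
  obtain ⟨k0, hk0m, hk0⟩ := hS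
  have hs0 : n + 2 ≤ f k0 + g (m - k0) := by
    have := hnc k0 hk0m; omega
  have claim : ∃ i ≤ m, n + 2 ≤ f i + g (m - i) ∧ (f (i+1) < f i ∨ g (m-i+1) < g (m-i)) := by
    by_contra hcl
    push_neg at hcl
    have heqf : ∀ i, i ≤ m → n+2 ≤ f i + g (m-i) →
        f (i+1) = f i ∧ g (m-i+1) = g (m-i) := by
      intro i him hi
      obtain ⟨a, b⟩ := hcl i him hi
      exact ⟨le_antisymm (hf.1 i) a, le_antisymm (hg.1 (m-i)) b⟩
    have hdown : ∀ d i, i + d = k0 → n + 2 ≤ f i + g (m - i) := by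
      intro d
      induction d with
      | zero => intro i hi; have : i = k0 := by omega
                subst this; exact hs0
      | succ d ih =>
        intro i hi
        have h2 := ih (i+1) (by omega)
        have hi1m : i + 1 ≤ m := by omega
        obtain ⟨_, hgq⟩ := heqf (i+1) hi1m h2
        have hmeq : m - (i+1) + 1 = m - i := by omega
        rw [hmeq] at hgq
        have hfe := hf.1 i
        omega
    have hsz : n + 2 ≤ f 0 + g m := by
      have := hdown k0 0 (by omega)
      simpa using this
    have hup : ∀ i, i ≤ m → (f i = f 0 ∧ n + 2 ≤ f i + g (m - i)) := by
      intro i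
      induction i with
      | zero => intro _; exact ⟨rfl, by simpa using hsz⟩
      | succ i ih =>
        intro hi1
        have hi : i ≤ m := by omega
        obtain ⟨hfeq, hsi⟩ := ih hi
        obtain ⟨hfq, _⟩ := heqf i hi hsi
        refine ⟨by rw [hfq, hfeq], ?_⟩
        have hga : g (m - i) ≤ g (m - (i+1)) := anti hg (by omega)
        omega
    obtain ⟨hfm0, hsm⟩ := hup m le_rfl
    obtain ⟨hfq, _⟩ := heqf m le_rfl hsm
    have hf00 : f 0 = 0 := by omega
    have hgstep : ∀ j, j ≤ m → g (j+1) = g j := by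
      intro j hj
      obtain ⟨_, hs⟩ := hup (m - j) (by omega)
      obtain ⟨_, hgq⟩ := heqf (m - j) (by omega) hs
      have h1 : m - (m - j) = j := by omega
      rw [h1] at hgq
      exact hgq
    have hgconst : ∀ j, j ≤ m + 1 → g j = g 0 := by
      intro j
      induction j with
      | zero => intro _; rfl
      | succ j ih =>
        intro hj
        rw [hgstep j (by omega), ih (by omega)]
    have hg00 := hgconst (m+1) le_rfl
    have h1 : f k0 ≤ f 0 := anti hf (Nat.zero_le _)
    have h2 : g (m - k0) ≤ g 0 := anti hg (Nat.zero_le _)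
    omega
  obtain ⟨i, him, hsi, hrem⟩ := claim
  rcases hrem with hrf | hrg
  · have hfi : 1 ≤ f i := by omega
    have hcont : Contained (Function.update f i (f i - 1)) g f g := by
      refine ⟨fun t => ?_, fun t => le_rfl⟩
      rcases eq_or_ne t i with rfl | ht
      · rw [Function.update_self]; omega
      · rw [Function.update_of_ne ht]
    have hneq : (Function.update f i (f i - 1), g) ≠ (f, g) := by
      intro heq
      have h1 : Function.update f i (f i - 1) = f := congrArg Prod.fst heq
      have h2 := congrFun h1 i
      rw [Function.update_self] at h2
      omega
    obtain ⟨k, hk, hkle⟩ := hmin _ g (update_sub_isPartition hf hrf) hg hcont hneq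
    rcases eq_or_ne k i with rfl | hki
    · rw [Function.update_self] at hkle
      omega
    · rw [Function.update_of_ne hki] at hkle
      have := hnc k hk
      omega
  · have hgi : 1 ≤ g (m - i) := by omega
    have hcont : Contained f (Function.update g (m-i) (g (m-i) - 1)) f g := by
      refine ⟨fun t => le_rfl, fun t => ?_⟩
      rcases eq_or_ne t (m-i) with rfl | ht
      · rw [Function.update_self]; omega
      · rw [Function.update_of_ne ht]
    have hneq : (f, Function.update g (m-i) (g (m-i) - 1)) ≠ (f, g) := by
      intro heq
      have h1 : Function.update g (m-i) (g (m-i) - 1) = g := congrArg Prod.snd heq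
      have h2 := congrFun h1 (m-i)
      rw [Function.update_self] at h2
      omega
    obtain ⟨k, hk, hkle⟩ := hmin f _ hf (update_sub_isPartition hg hrg) hcont hneq
    rcases eq_or_ne k i with rfl | hki
    · rw [Function.update_self] at hkle
      omega
    · rw [Function.update_of_ne (show m - k ≠ m - i by omega)] at hkle
      have := hnc k hk
      omega

lemma descent (m n : ℕ) (f g : ℕ → ℕ) (h : Good m n f g) (hpos : 0 < f 0) :
    ∃ f2 g2, RBump m f g f2 g2 ∧ Good m n f2 g2 ∧
      (∑ i ∈ Finset.range (m+1), f2 i) + 1 = ∑ i ∈ Finset.range (m+1), f i := by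
  obtain ⟨hf, hg, hfm, hgm, hsum⟩ := h
  have key : ∃ i, i ≤ m ∧ 0 < f i ∧ f (i+1) = 0 := by
    refine ⟨Nat.findGreatest (fun t => 0 < f t) m, Nat.findGreatest_le m,
      Nat.findGreatest_spec (P := fun t => 0 < f t) (Nat.zero_le m) hpos, ?_⟩
    rcases Nat.lt_or_ge (Nat.findGreatest (fun t => 0 < f t) m) m with hlt | hge
    · by_contra hne
      have hgr := Nat.findGreatest_is_greatest (P := fun t => 0 < f t) (n := m)
        (k := Nat.findGreatest (fun t => 0 < f t) m + 1) (Nat.lt_succ_self _) (by omega)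
      exact hgr (by omega)
    · have hieq : Nat.findGreatest (fun t => 0 < f t) m = m :=
        le_antisymm (Nat.findGreatest_le m) hge
      rw [hieq]; exact hfm
  obtain ⟨i, him, hfi, hfi1⟩ := key
  refine ⟨Function.update f i (f i - 1), Function.update g (m-i) (g (m-i) + 1),
    ⟨i, him, by omega, rfl, rfl⟩, ⟨?_, ?_, ?_, ?_, ?_⟩, ?_⟩
  · exact update_sub_isPartition hf (by omega)
  · constructor
    · intro t
      rcases eq_or_ne t (m-i) with hteq | ht
      · rw [hteq, Function.update_self,
          Function.update_of_ne (show m - i + 1 ≠ m - i by omega)]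
        have := hg.1 (m-i); omega
      · rw [Function.update_of_ne ht]
        rcases eq_or_ne (t+1) (m-i) with hti | hti
        · rw [hti, Function.update_self]
          have him1 : i + 1 ≤ m := by omega
          have hs1 := hsum (i+1) him1
          have hs0 := hsum i him
          have hteq : t = m - (i+1) := by omega
          rw [hteq]
          omega
        · rw [Function.update_of_ne hti]; exact hg.1 t
    · obtain ⟨N, hN⟩ := hg.2
      refine ⟨N + m + 1, fun t ht => ?_⟩
      rw [Function.update_of_ne (show t ≠ m - i by omega)]
      exact hN t (by omega)
  · rw [Function.update_of_ne (show m+1 ≠ i by omega)]; exact hfm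
  · rw [Function.update_of_ne (show m+1 ≠ m - i by omega)]; exact hgm
  · intro k hk
    by_cases hk' : k = i
    · rw [hk', Function.update_self, Function.update_self]
      have := hsum i him
      omega
    · rw [Function.update_of_ne hk', Function.update_of_ne (show m - k ≠ m - i by omega)]
      exact hsum k hk
  · have hmem : i ∈ Finset.range (m+1) := Finset.mem_range.mpr (by omega)
    rw [Finset.sum_update_of_mem hmem]
    have h2 : ∑ x ∈ Finset.range (m+1), f x
        = f i + ∑ x ∈ Finset.range (m+1) \ {i}, f x := by
      conv_lhs => rw [← Function.update_eq_self i f]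
      rw [Finset.sum_update_of_mem hmem]
    omega

lemma good_base (m n : ℕ) : Good m n (fun _ => 0) (fun j => if j ≤ m then n+1 else 0) := by
  refine ⟨⟨fun i => le_rfl, ⟨0, fun _ _ => rfl⟩⟩,
    ⟨?_, ⟨m+1, fun t ht => if_neg (by omega)⟩⟩, rfl, if_neg (by omega), ?_⟩
  · intro t
    by_cases h1 : t + 1 ≤ m
    · simp [h1, show t ≤ m by omega]
    · simp [h1]
  · intro k hk
    simp [Nat.sub_le m k]

lemma path_to_base (m n : ℕ) (N : ℕ) : ∀ f g : ℕ → ℕ,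
    (∑ i ∈ Finset.range (m+1), f i) = N → Good m n f g →
    ∃ (k : ℕ) (ν : ℕ → (ℕ → ℕ) × (ℕ → ℕ)),
      ν 0 = (f, g) ∧ ν k = (fun _ => 0, fun j => if j ≤ m then n+1 else 0) ∧
      (∀ j ≤ k, Good m n (ν j).1 (ν j).2) ∧
      (∀ j < k, RBump m (ν j).1 (ν j).2 (ν (j + 1)).1 (ν (j + 1)).2) := by
  induction N with
  | zero =>
    intro f g hsum hgood
    obtain ⟨hf, hg, hfm, hgm, hs⟩ := hgood
    have hf0 : f = fun _ => 0 := by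
      funext t
      by_cases ht : t ≤ m
      · exact Finset.sum_eq_zero_iff.mp hsum t (Finset.mem_range.mpr (by omega))
      · have := anti hf (show m+1 ≤ t by omega); omega
    have hg0 : g = fun j => if j ≤ m then n+1 else 0 := by
      funext t
      by_cases ht : t ≤ m
      · have h1 := hs (m - t) (Nat.sub_le _ _)
        have h2 : m - (m - t) = t := by omega
        rw [h2] at h1
        have h3 : f (m-t) = 0 := by rw [hf0]
        simp only [if_pos ht]
        omega
      · have := anti hg (show m+1 ≤ t by omega)
        simp only [if_neg ht]
        omega
    subst hf0
    subst hg0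
    exact ⟨0, fun _ => ((fun _ => 0), fun j => if j ≤ m then n+1 else 0), rfl, rfl,
      fun j _ => good_base m n, fun j hj => absurd hj (by omega)⟩
  | succ N ih =>
    intro f g hsum hgood
    have hpos : 0 < f 0 := by
      by_contra h0
      have hz : ∀ t ∈ Finset.range (m+1), f t = 0 := by
        intro t _
        have := anti hgood.1 (Nat.zero_le t)
        omega
      rw [Finset.sum_eq_zero hz] at hsum
      omega
    obtain ⟨f2, g2, hb, hgood2, hdec⟩ := descent m n f g hgood hpos
    obtain ⟨k, ν, hν0, hνk, hνg, hνs⟩ := ih f2 g2 (by omega) hgood2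
    refine ⟨k+1, fun j => if j = 0 then (f, g) else ν (j-1), by simp, ?_, ?_, ?_⟩
    · simp only [if_neg (Nat.succ_ne_zero k), Nat.add_sub_cancel]
      exact hνk
    · intro j hj
      rcases Nat.eq_zero_or_pos j with rfl | hjp
      · simpa using hgood
      · simp only [if_neg (show j ≠ 0 by omega)]
        exact hνg (j-1) (by omega)
    · intro j hj
      rcases Nat.eq_zero_or_pos j with rfl | hjp
      · simp only [if_pos rfl, if_neg (Nat.succ_ne_zero 0), Nat.sub_self]
        rw [hν0]
        exact hb
      · obtain ⟨t, rfl⟩ : ∃ t, j = t + 1 := ⟨j - 1, by omega⟩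
        simp only [if_neg (show t + 1 ≠ 0 by omega), if_neg (show t + 1 + 1 ≠ 0 by omega),
          Nat.add_sub_cancel]
        exact hνs t (by omega)

lemma rbump_reverse (m : ℕ) (f g f2 g2 : ℕ → ℕ) (hg : IsPartition g)
    (h : RBump m f g f2 g2) : LBump m f2 g2 f g := by
  obtain ⟨i, him, hlt, hf2, hg2⟩ := h
  have hfi : 1 ≤ f i := by omega
  refine ⟨m - i, Nat.sub_le _ _, ?_, ?_, ?_⟩
  · rw [hg2, Function.update_self, Function.update_of_ne (show m - i + 1 ≠ m - i by omega)]
    have := hg.1 (m-i); omega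
  · rw [hg2, Function.update_self, Function.update_idem, Nat.add_sub_cancel,
      Function.update_eq_self]
  · have hmi : m - (m - i) = i := by omega
    rw [hmi, hf2, Function.update_self, Function.update_idem,
      show f i - 1 + 1 = f i by omega, Function.update_eq_self]

end AlmostCrossAux

open AlmostCrossAux in
/-- any two almost `(m|n)`-cross bipartitions are connected by a finite
sequence of one-box-bumps through almost `(m|n)`-cross bipartitions. -/
theorem almostCross_connected_by_bumps (m n : ℕ) (f g f' g' : ℕ → ℕ)
    (hf : IsPartition f) (hg : IsPartition g)
    (hf' : IsPartition f') (hg' : IsPartition g')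
    (h : AlmostCross m n f g) (h' : AlmostCross m n f' g') :
    ∃ (k : ℕ) (ν : ℕ → (ℕ → ℕ) × (ℕ → ℕ)),
      ν 0 = (f, g) ∧ ν k = (f', g') ∧
      (∀ j ≤ k, AlmostCross m n (ν j).1 (ν j).2) ∧
      (∀ j < k, RBump m (ν j).1 (ν j).2 (ν (j + 1)).1 (ν (j + 1)).2 ∨
        LBump m (ν j).1 (ν j).2 (ν (j + 1)).1 (ν (j + 1)).2) := by
  have G := almostCross_good m n f g hf hg h
  have G' := almostCross_good m n f' g' hf' hg' h'
  obtain ⟨k, ν, hν0, hνk, hνg, hνs⟩ :=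
    path_to_base m n (∑ i ∈ Finset.range (m+1), f i) f g rfl G
  obtain ⟨k', μ, hμ0, hμk, hμg, hμs⟩ :=
    path_to_base m n (∑ i ∈ Finset.range (m+1), f' i) f' g' rfl G'
  refine ⟨k + k', fun j => if j ≤ k then ν j else μ (k + k' - j), by simp [hν0], ?_, ?_, ?_⟩
  · by_cases hk' : k + k' ≤ k
    · have hkz : k' = 0 := by omega
      simp only [if_pos hk']
      rw [show k + k' = k by omega, hνk, ← hμk, hkz, hμ0]
    · simp only [if_neg hk', Nat.sub_self]
      exact hμ0
  · intro j hj
    by_cases hjk : j ≤ k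
    · simp only [if_pos hjk]
      exact good_almostCross m n _ _ (hνg j hjk)
    · simp only [if_neg hjk]
      exact good_almostCross m n _ _ (hμg _ (by omega))
  · intro j hj
    by_cases h1 : j + 1 ≤ k
    · simp only [if_pos h1, if_pos (show j ≤ k by omega)]
      exact Or.inl (hνs j (by omega))
    · by_cases h2 : j ≤ k
      · have hjeq : j = k := by omega
        have hk1 : 1 ≤ k' := by omega
        simp only [if_pos h2, if_neg h1]
        right
        have hstep := hμs (k' - 1) (by omega)
        rw [show k' - 1 + 1 = k' by omega] at hstep
        rw [show k + k' - (j+1) = k' - 1 by omega, hjeq, hνk, ← hμk]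
        exact rbump_reverse m _ _ _ _ (hμg (k'-1) (by omega)).2.1 hstep
      · simp only [if_neg h2, if_neg h1]
        right
        have ht : k + k' - j = (k + k' - (j+1)) + 1 := by omega
        have hstep := hμs (k + k' - (j+1)) (by omega)
        rw [ht]
        exact rbump_reverse m _ _ _ _ (hμg _ (by omega)).2.1 hstep
end

section
/- Distinct pairs (m, n) and (m', n') of nonnegative integers with m − n = m' − n' and (m,n) ≠ (m',n') give distinct sets of non-(m|n)-cross bipartitions; moreover if m ≤ m' and n ≤ n' then every bipartition that is not (m'|n')-cross is also not (m|n)-cross, and the inclusion of these sets is strict. -/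
lemma nonCross_witness (m n : ℕ) :
    ∃ f g : ℕ → ℕ, IsPartition f ∧ IsPartition g ∧ ¬ Cross m n f g ∧
      ∀ M N, m < M → Cross M N f g := by
  refine ⟨fun i => if i ≤ m then n + 1 else 0, fun _ => 0, ⟨?_, m + 1, ?_⟩,
    ⟨fun _ => le_refl 0, 0, fun _ _ => rfl⟩, ?_, ?_⟩
  · intro i; dsimp; split_ifs with h1 h2 <;> omega
  · intro i hi; dsimp; rw [if_neg]; omega
  · rintro ⟨k, hk, h⟩; simp only [if_pos hk] at h; omega
  · intro M N hM
    exact ⟨m + 1, hM, by simp⟩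

lemma cross_mono' (m n m' n' : ℕ) (hm : m ≤ m') (hn : n ≤ n') (f g : ℕ → ℕ)
    (hg : IsPartition g) (h : Cross m n f g) : Cross m' n' f g := by
  obtain ⟨k, hk, h⟩ := h
  refine ⟨k, hk.trans hm, ?_⟩
  have : g (m' - k) ≤ g (m - k) := antitone_nat_of_succ_le hg.1 (by omega)
  omega

lemma nonCross_sets_ne (m n m' n' : ℕ) (h : m < m') :
    ({p : (ℕ → ℕ) × (ℕ → ℕ) |
        IsPartition p.1 ∧ IsPartition p.2 ∧ ¬ Cross m n p.1 p.2} ≠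
      {p : (ℕ → ℕ) × (ℕ → ℕ) |
        IsPartition p.1 ∧ IsPartition p.2 ∧ ¬ Cross m' n' p.1 p.2}) := by
  obtain ⟨f, g, hf, hg, hnc, hc⟩ := nonCross_witness m n
  intro heq
  have h1 : (f, g) ∈ {p : (ℕ → ℕ) × (ℕ → ℕ) |
      IsPartition p.1 ∧ IsPartition p.2 ∧ ¬ Cross m n p.1 p.2} := ⟨hf, hg, hnc⟩
  rw [heq] at h1
  exact h1.2.2 (hc m' n' h)

/-- for `(m, n) ≠ (m', n')` with `m − n = m' − n'`, the sets of
non-cross bipartitions differ; and if `m ≤ m'` and `n ≤ n'`, the set of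
non-`(m'|n')`-cross bipartitions is strictly contained in the set of
non-`(m|n)`-cross bipartitions. -/
theorem nonCross_sets_distinct (m n m' n' : ℕ)
    (hδ : (m : ℤ) - n = (m' : ℤ) - n') (hne : (m, n) ≠ (m', n')) :
    ({p : (ℕ → ℕ) × (ℕ → ℕ) |
        IsPartition p.1 ∧ IsPartition p.2 ∧ ¬ Cross m n p.1 p.2} ≠
      {p : (ℕ → ℕ) × (ℕ → ℕ) |
        IsPartition p.1 ∧ IsPartition p.2 ∧ ¬ Cross m' n' p.1 p.2}) ∧
    (m ≤ m' → n ≤ n' →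
      {p : (ℕ → ℕ) × (ℕ → ℕ) |
          IsPartition p.1 ∧ IsPartition p.2 ∧ ¬ Cross m' n' p.1 p.2} ⊂
        {p : (ℕ → ℕ) × (ℕ → ℕ) |
          IsPartition p.1 ∧ IsPartition p.2 ∧ ¬ Cross m n p.1 p.2}) := by
  have hmm : m ≠ m' := by
    rintro rfl
    have : n = n' := by omega
    exact hne (by rw [this])
  constructor
  · rcases lt_or_gt_of_ne hmm with h | h
    · exact nonCross_sets_ne m n m' n' h
    · exact (nonCross_sets_ne m' n' m n h).symm
  · intro hm hn
    have hlt : m < m' := lt_of_le_of_ne hm hmm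
    constructor
    · rintro ⟨f, g⟩ ⟨hf, hg, hnc⟩
      exact ⟨hf, hg, fun hc => hnc (cross_mono' m n m' n' hm hn f g hg hc)⟩
    · intro hsub
      obtain ⟨f, g, hf, hg, hnc, hc⟩ := nonCross_witness m n
      have hmem : (f, g) ∈ {p : (ℕ → ℕ) × (ℕ → ℕ) |
          IsPartition p.1 ∧ IsPartition p.2 ∧ ¬ Cross m' n' p.1 p.2} :=
        hsub ⟨hf, hg, hnc⟩
      exact hmem.2.2 (hc m' n' hlt)
end
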